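/- For any algebraic curvature tensor R on a vector space V with nondegenerate symmetric bilinear form g, the tensor g^{ij} S_{i a₂ b₁ b₂} S_{j c₂ d₁ d₂}, where S is the symmetrisation S_{a₁a₂b₁b₂} = (1/√3)(R_{a₁b₁a₂b₂}+R_{a₁b₂a₂b₁}), vanishes under the Young symmetriser that first symmetrises over c₂,b₂,b₁,d₁ and then antisymmetrises over c₂,d₂,a₂ (the hook-shaped symmetriser of frame (4,1,1)). -/

import Mathlib

/-!
Write `t(a,b,c; u,v,w)` for the contraction `g^{ij} S_{iabc} S_{juvw}`. It is invariant under
exchanging the two triples, because `g⁻¹` is symmetric, and it satisfies the cyclic identity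
`t(a,b,c; u,v,w) + t(a,b,c; v,u,w) + t(a,b,c; w,u,v) = 0` inherited from
`S_{abcd} + S_{acbd} + S_{adbc} = 0`. Summing over all orderings `x` of four fixed indices, the
cyclic identity gives `2 Σ t(X,x₀,x₁; x₂,x₃,Y) = -Σ t(X,x₀,x₁; Y,x₂,x₃)`, and the exchange
symmetry makes the right-hand side symmetric in `X` and `Y`. Hence the row-symmetrised tensor is symmetric in its `a₂` and `d₂`
slots, and antisymmetrising over `(c₂, d₂, a₂)` annihilates it.
-/

/-- The contraction g^{ij} S_{i a₂ b₁ b₂} S_{j c₂ d₁ d₂}, as a tensor in the six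
free indices (a₂, b₁, b₂, c₂, d₁, d₂). -/
def contrSS {n : ℕ} (ginv : Fin n → Fin n → ℝ)
    (S : Fin n → Fin n → Fin n → Fin n → ℝ)
    (a₂ b₁ b₂ c₂ d₁ d₂ : Fin n) : ℝ :=
  ∑ i, ∑ j, ginv i j * S i a₂ b₁ b₂ * S j c₂ d₁ d₂

/-- Symmetrisation of `contrSS` over the four indices (c₂, b₂, b₁, d₁). -/
def symRow {n : ℕ} (ginv : Fin n → Fin n → ℝ)
    (S : Fin n → Fin n → Fin n → Fin n → ℝ)
    (a₂ b₁ b₂ c₂ d₁ d₂ : Fin n) : ℝ :=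
  ∑ σ : Equiv.Perm (Fin 4),
    contrSS ginv S a₂ (![c₂, b₂, b₁, d₁] (σ 2)) (![c₂, b₂, b₁, d₁] (σ 1))
      (![c₂, b₂, b₁, d₁] (σ 0)) (![c₂, b₂, b₁, d₁] (σ 3)) d₂

open Equiv Finset

theorem apply_comm_of_sum_mul_eq_ite {ι R : Type*} [Fintype ι] [DecidableEq ι] [CommRing R]
    {g ginv : ι → ι → R} (hg : ∀ a b, g a b = g b a)
    (hginv : ∀ i j, (∑ k, g i k * ginv k j) = if i = j then 1 else 0) (i j : ι) :
    ginv i j = ginv j i := by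
  have hmul : Matrix.of g * Matrix.of ginv = 1 := by
    ext i j
    simpa [Matrix.mul_apply, Matrix.one_apply] using hginv i j
  have hsymm : (Matrix.of g).IsSymm := Matrix.IsSymm.ext fun i j => hg j i
  have h := hsymm.inv.apply j i
  rwa [Matrix.inv_eq_right_inv hmul] at h

theorem cyclic_of_eq_symmetrise {α R : Type*} [CommRing R] {T S : α → α → α → α → R}
    (k : R) (hanti : ∀ a b c d, T a b d c = -T a b c d)
    (hS : S = fun a₁ a₂ b₁ b₂ => k * (T a₁ b₁ a₂ b₂ + T a₁ b₂ a₂ b₁)) (a b c d : α) :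
    S a b c d + S a c b d + S a d b c = 0 := by
  subst hS
  linear_combination k * (hanti a c b d + hanti a d b c + hanti a b c d)

theorem sum_sign_mul_eq_zero_of_mul_swap {ι R : Type*} [Fintype ι] [DecidableEq ι] [Ring R]
    [IsAddTorsionFree R] (f : Perm ι → R) {i j : ι} (hij : i ≠ j)
    (hf : ∀ σ, f (σ * swap i j) = f σ) :
    ∑ σ : Perm ι, ((Perm.sign σ : ℤ) : R) * f σ = 0 := by
  refine neg_eq_self.1 ?_
  calc -∑ σ : Perm ι, ((Perm.sign σ : ℤ) : R) * f σ
      = ∑ σ : Perm ι, ((Perm.sign (σ * swap i j) : ℤ) : R) * f (σ * swap i j) := by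
        simp [Perm.sign_mul, Perm.sign_swap hij, hf, ← sum_neg_distrib]
    _ = ∑ σ : Perm ι, ((Perm.sign σ : ℤ) : R) * f σ :=
        Equiv.sum_comp (Equiv.mulRight (swap i j)) fun σ => ((Perm.sign σ : ℤ) : R) * f σ

theorem sum_perm_fin_four_comm_of_exchange_cyclic {α M : Type*} [AddCommGroup M]
    [IsAddTorsionFree M] (t : α → α → α → α → α → α → M)
    (hexch : ∀ a b c u v w, t a b c u v w = t u v w a b c)
    (hcyc : ∀ a b c u v w, t a b c u v w + t a b c v u w + t a b c w u v = 0)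
    (x : Fin 4 → α) (X Y : α) :
    ∑ σ : Perm (Fin 4), t X (x (σ 0)) (x (σ 1)) (x (σ 2)) (x (σ 3)) Y
      = ∑ σ : Perm (Fin 4), t Y (x (σ 0)) (x (σ 1)) (x (σ 2)) (x (σ 3)) X := by
  set K : α → α → M := fun P Q =>
    ∑ σ : Perm (Fin 4), t P (x (σ 0)) (x (σ 1)) Q (x (σ 2)) (x (σ 3))
  have hdouble : ∀ X Y,
      2 • ∑ σ : Perm (Fin 4), t X (x (σ 0)) (x (σ 1)) (x (σ 2)) (x (σ 3)) Y = -K X Y := by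
    intro X Y
    have hswap : ∑ σ : Perm (Fin 4), t X (x (σ 0)) (x (σ 1)) (x (σ 3)) (x (σ 2)) Y
        = ∑ σ : Perm (Fin 4), t X (x (σ 0)) (x (σ 1)) (x (σ 2)) (x (σ 3)) Y :=
      Equiv.sum_comp (Equiv.mulRight (swap 2 3))
        fun σ => t X (x (σ 0)) (x (σ 1)) (x (σ 2)) (x (σ 3)) Y
    have hsum := sum_eq_zero (s := univ) fun (σ : Perm (Fin 4)) _ =>
      hcyc X (x (σ 0)) (x (σ 1)) (x (σ 2)) (x (σ 3)) Y
    rw [sum_add_distrib, sum_add_distrib, hswap] at hsum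
    rw [two_nsmul]
    exact eq_neg_of_add_eq_zero_left hsum
  have hK : K X Y = K Y X :=
    calc K X Y = ∑ σ : Perm (Fin 4), t Y (x (σ 2)) (x (σ 3)) X (x (σ 0)) (x (σ 1)) :=
          sum_congr rfl fun σ _ => hexch _ _ _ _ _ _
      _ = K Y X := Equiv.sum_comp (Equiv.mulRight (swap 0 2 * swap 1 3))
          fun σ => t Y (x (σ 0)) (x (σ 1)) X (x (σ 2)) (x (σ 3))
  rw [← nsmul_right_inj two_ne_zero, hdouble, hdouble, hK]

section

variable {n : ℕ} (ginv : Fin n → Fin n → ℝ) (S : Fin n → Fin n → Fin n → Fin n → ℝ)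

theorem contrSS_exchange (hginv : ∀ i j, ginv i j = ginv j i) (a b c u v w : Fin n) :
    contrSS ginv S a b c u v w = contrSS ginv S u v w a b c := by
  unfold contrSS
  rw [sum_comm]
  refine sum_congr rfl fun j _ => sum_congr rfl fun i _ => ?_
  rw [hginv i j]
  ring

theorem contrSS_cyclic (hS : ∀ a b c d, S a b c d + S a c b d + S a d b c = 0)
    (a b c u v w : Fin n) :
    contrSS ginv S a b c u v w + contrSS ginv S a b c v u w
      + contrSS ginv S a b c w u v = 0 := by
  simp only [contrSS, ← sum_add_distrib]
  refine sum_eq_zero fun i _ => sum_eq_zero fun j _ => ?_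
  linear_combination ginv i j * S i a b c * hS j u v w

theorem symRow_comm (hginv : ∀ i j, ginv i j = ginv j i)
    (hS : ∀ a b c d, S a b c d + S a c b d + S a d b c = 0) (A b₁ b₂ C d₁ D : Fin n) :
    symRow ginv S A b₁ b₂ C d₁ D = symRow ginv S D b₁ b₂ C d₁ A := by
  set x := ![C, b₂, b₁, d₁]
  calc symRow ginv S A b₁ b₂ C d₁ D
      = ∑ σ : Perm (Fin 4), contrSS ginv S A (x (σ 0)) (x (σ 1)) (x (σ 2)) (x (σ 3)) D :=
        (Equiv.sum_comp (Equiv.mulRight (swap 0 2)) _).symm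
    _ = ∑ σ : Perm (Fin 4), contrSS ginv S D (x (σ 0)) (x (σ 1)) (x (σ 2)) (x (σ 3)) A :=
        sum_perm_fin_four_comm_of_exchange_cyclic _ (contrSS_exchange ginv S hginv)
          (contrSS_cyclic ginv S hS) x A D
    _ = symRow ginv S D b₁ b₂ C d₁ A := Equiv.sum_comp (Equiv.mulRight (swap 0 2))
        fun σ => contrSS ginv S D (x (σ 2)) (x (σ 1)) (x (σ 0)) (x (σ 3)) A

end

theorem hook_symmetriser_annihilates_general {n : ℕ}
    (g ginv : Fin n → Fin n → ℝ)
    (hgsym : ∀ a b, g a b = g b a)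
    (hginv : ∀ i j, (∑ k, g i k * ginv k j) = if i = j then 1 else 0)
    (R : Fin n → Fin n → Fin n → Fin n → ℝ)
    (hanti2 : ∀ a b c d, R a b d c = -R a b c d)
    (S : Fin n → Fin n → Fin n → Fin n → ℝ)
    (hS : S = fun a₁ a₂ b₁ b₂ => (Real.sqrt 3)⁻¹ * (R a₁ b₁ a₂ b₂ + R a₁ b₂ a₂ b₁)) :
    ∀ a₂ b₁ b₂ c₂ d₁ d₂ : Fin n,
      (∑ ρ : Equiv.Perm (Fin 3), ((Equiv.Perm.sign ρ : ℤ) : ℝ) *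
          symRow ginv S (![c₂, d₂, a₂] (ρ 2)) b₁ b₂ (![c₂, d₂, a₂] (ρ 0)) d₁
            (![c₂, d₂, a₂] (ρ 1)))
        = 0 := by
  intro a₂ b₁ b₂ c₂ d₁ d₂
  have hginv_symm := apply_comm_of_sum_mul_eq_ite hgsym hginv
  have hS_cyclic := cyclic_of_eq_symmetrise _ hanti2 hS
  exact sum_sign_mul_eq_zero_of_mul_swap _ (i := 1) (j := 2) (by decide) fun ρ =>
    (symRow_comm ginv S hginv_symm hS_cyclic _ _ _ _ _ _).symm

/-- for any algebraic curvature tensor R with symmetrisation S, the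
tensor g^{ij} S_{i a₂ b₁ b₂} S_{j c₂ d₁ d₂} is annihilated by the hook-shaped
Young symmetriser of frame (4,1,1): first symmetrise over (c₂,b₂,b₁,d₁), then
antisymmetrise over (c₂,d₂,a₂). -/
theorem hook_symmetriser_annihilates {n : ℕ}
    (g ginv : Fin n → Fin n → ℝ)
    (hgsym : ∀ a b, g a b = g b a)
    (hginv : ∀ i j, (∑ k, g i k * ginv k j) = if i = j then 1 else 0)
    (R : Fin n → Fin n → Fin n → Fin n → ℝ)
    (hanti1 : ∀ a b c d, R b a c d = -R a b c d)
    (hanti2 : ∀ a b c d, R a b d c = -R a b c d)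
    (hpair : ∀ a b c d, R c d a b = R a b c d)
    (hbianchi : ∀ a b c d, R a b c d + R a c d b + R a d b c = 0)
    (S : Fin n → Fin n → Fin n → Fin n → ℝ)
    (hS : S = fun a₁ a₂ b₁ b₂ => (Real.sqrt 3)⁻¹ * (R a₁ b₁ a₂ b₂ + R a₁ b₂ a₂ b₁)) :
    ∀ a₂ b₁ b₂ c₂ d₁ d₂ : Fin n,
      (∑ ρ : Equiv.Perm (Fin 3), ((Equiv.Perm.sign ρ : ℤ) : ℝ) *
          symRow ginv S (![c₂, d₂, a₂] (ρ 2)) b₁ b₂ (![c₂, d₂, a₂] (ρ 0)) d₁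
            (![c₂, d₂, a₂] (ρ 1)))
        = 0 :=
  hook_symmetriser_annihilates_general g ginv hgsym hginv R hanti2 S hS
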